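/- arXiv:1406.7447 — 2 statements merged into one kernel-verified Lean document; each statement's English description precedes it below -/
import Mathlib

section
/- Fix μ₁, μ₂ ∈ [0,1] with μ₁ ≤ μ₂, and define φ(λ₁, λ₂) = kl(μ₁, λ₁) + kl(μ₂, λ₂) on the set Λ = {(λ₁, λ₂) ∈ [0,1]² : λ₁ ≥ λ₂}. Then the infimum of φ over Λ equals kl(μ₁, (μ₁+μ₂)/2) + kl(μ₂, (μ₁+μ₂)/2); in particular, every minimizer satisfies λ₁ = λ₂. -/
/-!
For `q, r ∈ (0, 1)` the Bernoulli divergence obeys the three-point identity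
`kl(p, q) = kl(p, r) + kl(r, q) + (p - r) (logit r - logit q)`. Taking `r = m := (μ₁ + μ₂) / 2`
and adding the identities for `(μ₁, λ₁)` and `(μ₂, λ₂)`, the `logit m` terms cancel:
`kl(μ₁, λ₁) + kl(μ₂, λ₂) = kl(μ₁, m) + kl(μ₂, m) + kl(m, λ₁) + kl(m, λ₂)`
`  + (μ₂ - μ₁)/2 · (logit λ₁ - logit λ₂)`.
For `λ₂ ≤ λ₁` every extra term is nonnegative, and the last one is positive when `μ₁ < μ₂` and
`λ₂ < λ₁`, because `logit` is strictly increasing. If `μ₁ < μ₂`, an admissible pair off the open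
square has `λ₁ = 1 > μ₁` or `λ₂ = 0 < μ₂`, so the objective is `+∞` there. When `μ₁ = μ₂` the claim
reduces to `kl(p, q) ≥ 0` with equality only at `p = q`.
-/

/-- Bernoulli KL divergence `kl(p,q)`, with values in `EReal`:
`kl(p,q) = +∞` when `q ∈ {0,1}` and `p ≠ q`, and the convention `0·log 0 = 0`. -/
noncomputable def klBern (p q : ℝ) : EReal :=
  if p = q then 0
  else if q = 0 ∨ q = 1 then ⊤
  else ((p * Real.log (p / q) + (1 - p) * Real.log ((1 - p) / (1 - q)) : ℝ) : EReal)

open Real Set InformationTheory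

noncomputable def klBernReal (p q : ℝ) : ℝ :=
  p * log (p / q) + (1 - p) * log ((1 - p) / (1 - q))

noncomputable def logit (q : ℝ) : ℝ := log q - log (1 - q)

lemma logit_strictMonoOn : StrictMonoOn logit (Ioo 0 1) := by
  intro a ha b hb hab
  have hlog := log_lt_log ha.1 hab
  have hlog_compl := log_lt_log (sub_pos.2 hb.2) (by linarith : 1 - b < 1 - a)
  simp only [logit]
  linarith

section klBernReal

variable {p q r : ℝ}

lemma klBernReal_eq_klFun (p : ℝ) (hq : q ∈ Ioo 0 1) :
    klBernReal p q = q * klFun (p / q) + (1 - q) * klFun ((1 - p) / (1 - q)) := by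
  have hq0 : q ≠ 0 := hq.1.ne'
  have hq1 : 1 - q ≠ 0 := (sub_pos.2 hq.2).ne'
  simp only [klBernReal, klFun_apply]
  field_simp
  ring

lemma klBernReal_nonneg (hp : p ∈ Icc 0 1) (hq : q ∈ Ioo 0 1) : 0 ≤ klBernReal p q := by
  have hq1 : 0 < 1 - q := sub_pos.2 hq.2
  rw [klBernReal_eq_klFun p hq]
  exact add_nonneg (mul_nonneg hq.1.le (klFun_nonneg (div_nonneg hp.1 hq.1.le)))
    (mul_nonneg hq1.le (klFun_nonneg (div_nonneg (sub_nonneg.2 hp.2) hq1.le)))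

lemma klBernReal_pos (hp : p ∈ Icc 0 1) (hq : q ∈ Ioo 0 1) (hpq : p ≠ q) :
    0 < klBernReal p q := by
  have hq1 : 0 < 1 - q := sub_pos.2 hq.2
  have hpq' : 0 < klFun (p / q) := by
    refine (klFun_nonneg (div_nonneg hp.1 hq.1.le)).lt_of_ne (Ne.symm ?_)
    rwa [Ne, klFun_eq_zero_iff (div_nonneg hp.1 hq.1.le), div_eq_one_iff_eq hq.1.ne']
  rw [klBernReal_eq_klFun p hq]
  exact add_pos_of_pos_of_nonneg (mul_pos hq.1 hpq')
    (mul_nonneg hq1.le (klFun_nonneg (div_nonneg (sub_nonneg.2 hp.2) hq1.le)))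

lemma mul_log_div_eq_sub (a : ℝ) {b : ℝ} (hb : b ≠ 0) :
    a * log (a / b) = a * log a - a * log b := by
  rcases eq_or_ne a 0 with rfl | ha
  · simp
  · rw [log_div ha hb]
    ring

lemma klBernReal_three_point (p : ℝ) (hq : q ∈ Ioo 0 1) (hr : r ∈ Ioo 0 1) :
    klBernReal p q = klBernReal p r + klBernReal r q + (p - r) * (logit r - logit q) := by
  have hq1 : 1 - q ≠ 0 := (sub_pos.2 hq.2).ne'
  have hr1 : 1 - r ≠ 0 := (sub_pos.2 hr.2).ne'
  simp only [klBernReal, logit, mul_log_div_eq_sub _ hq.1.ne', mul_log_div_eq_sub _ hr.1.ne',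
    mul_log_div_eq_sub _ hq1, mul_log_div_eq_sub _ hr1]
  ring

end klBernReal

section klBern

variable {p q : ℝ}

lemma klBern_self (p : ℝ) : klBern p p = 0 := by simp [klBern]

lemma klBern_of_mem_Ioo (p : ℝ) (hq : q ∈ Ioo 0 1) : klBern p q = klBernReal p q := by
  rcases eq_or_ne p q with rfl | hpq
  · rw [klBern_self, klBernReal_eq_klFun p hq, div_self hq.1.ne',
      div_self (sub_pos.2 hq.2).ne', klFun_one]
    simp
  · rw [klBern, if_neg hpq, if_neg (by rintro (h | h) <;> linarith [hq.1, hq.2])]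
    rfl

lemma klBern_eq_top (hpq : p ≠ q) (hq : q = 0 ∨ q = 1) : klBern p q = ⊤ := by
  rw [klBern, if_neg hpq, if_pos hq]

lemma klBern_ne_bot (p q : ℝ) : klBern p q ≠ ⊥ := by
  unfold klBern
  split_ifs
  exacts [EReal.zero_ne_bot, top_ne_bot, EReal.coe_ne_bot _]

lemma klBern_pos (hp : p ∈ Icc 0 1) (hq : q ∈ Icc 0 1) (hpq : p ≠ q) : 0 < klBern p q := by
  rcases hq.1.eq_or_lt with rfl | hq0
  · simp [klBern_eq_top hpq (Or.inl rfl)]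
  rcases hq.2.eq_or_lt with rfl | hq1
  · simp [klBern_eq_top hpq (Or.inr rfl)]
  rw [klBern_of_mem_Ioo p ⟨hq0, hq1⟩]
  exact_mod_cast klBernReal_pos hp ⟨hq0, hq1⟩ hpq

lemma klBern_nonneg (hp : p ∈ Icc 0 1) (hq : q ∈ Icc 0 1) : 0 ≤ klBern p q := by
  rcases eq_or_ne p q with rfl | hpq
  · rw [klBern_self]
  · exact (klBern_pos hp hq hpq).le

end klBern

section midpoint

variable {μ₁ μ₂ lam₁ lam₂ : ℝ}

lemma klBernReal_add_eq_midpoint_add (hm : (μ₁ + μ₂) / 2 ∈ Ioo 0 1)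
    (hl₁ : lam₁ ∈ Ioo 0 1) (hl₂ : lam₂ ∈ Ioo 0 1) :
    klBernReal μ₁ lam₁ + klBernReal μ₂ lam₂
      = klBernReal μ₁ ((μ₁ + μ₂) / 2) + klBernReal μ₂ ((μ₁ + μ₂) / 2)
        + klBernReal ((μ₁ + μ₂) / 2) lam₁ + klBernReal ((μ₁ + μ₂) / 2) lam₂
        + (μ₂ - μ₁) / 2 * (logit lam₁ - logit lam₂) := by
  rw [klBernReal_three_point μ₁ hl₁ hm, klBernReal_three_point μ₂ hl₂ hm]
  ring

lemma klBernReal_midpoint_add_le (hm : (μ₁ + μ₂) / 2 ∈ Ioo 0 1)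
    (hl₁ : lam₁ ∈ Ioo 0 1) (hl₂ : lam₂ ∈ Ioo 0 1) :
    klBernReal μ₁ ((μ₁ + μ₂) / 2) + klBernReal μ₂ ((μ₁ + μ₂) / 2)
        + (μ₂ - μ₁) / 2 * (logit lam₁ - logit lam₂)
      ≤ klBernReal μ₁ lam₁ + klBernReal μ₂ lam₂ := by
  rw [klBernReal_add_eq_midpoint_add hm hl₁ hl₂]
  have h₁ := klBernReal_nonneg (Ioo_subset_Icc_self hm) hl₁
  have h₂ := klBernReal_nonneg (Ioo_subset_Icc_self hm) hl₂
  linarith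

lemma klBern_add_eq_top_or_mem_Ioo (h₁ : 0 ≤ μ₁) (h₂ : μ₂ ≤ 1) (h : μ₁ < μ₂)
    (hl₁ : lam₁ ≤ 1) (hl₂ : 0 ≤ lam₂) (hle : lam₂ ≤ lam₁) :
    klBern μ₁ lam₁ + klBern μ₂ lam₂ = ⊤ ∨ lam₁ ∈ Ioo 0 1 ∧ lam₂ ∈ Ioo 0 1 := by
  rcases hl₁.eq_or_lt with rfl | hl₁'
  · left
    rw [klBern_eq_top (by linarith) (Or.inr rfl), EReal.top_add_of_ne_bot (klBern_ne_bot _ _)]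
  rcases hl₂.eq_or_lt with rfl | hl₂'
  · left
    rw [klBern_eq_top (by linarith) (Or.inl rfl), EReal.add_top_of_ne_bot (klBern_ne_bot _ _)]
  exact Or.inr ⟨⟨hl₂'.trans_le hle, hl₁'⟩, ⟨hl₂', hle.trans_lt hl₁'⟩⟩

lemma klBern_midpoint_add_le (h₁ : μ₁ ∈ Icc 0 1) (h₂ : μ₂ ∈ Icc 0 1) (h : μ₁ ≤ μ₂)
    (hl₁ : lam₁ ∈ Icc 0 1) (hl₂ : lam₂ ∈ Icc 0 1) (hle : lam₂ ≤ lam₁) :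
    klBern μ₁ ((μ₁ + μ₂) / 2) + klBern μ₂ ((μ₁ + μ₂) / 2)
      ≤ klBern μ₁ lam₁ + klBern μ₂ lam₂ := by
  rcases h.eq_or_lt with rfl | hμ
  · rw [add_self_div_two, klBern_self, add_zero]
    exact add_nonneg (klBern_nonneg h₁ hl₁) (klBern_nonneg h₁ hl₂)
  rcases klBern_add_eq_top_or_mem_Ioo h₁.1 h₂.2 hμ hl₁.2 hl₂.1 hle with htop | ⟨hl₁', hl₂'⟩
  · exact htop ▸ le_top
  have hm : (μ₁ + μ₂) / 2 ∈ Ioo 0 1 := ⟨by linarith [h₁.1], by linarith [h₂.2]⟩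
  have hlogit := sub_nonneg.2 (logit_strictMonoOn.monotoneOn hl₂' hl₁' hle)
  have hgap := mul_nonneg (by linarith : 0 ≤ (μ₂ - μ₁) / 2) hlogit
  have hbound := klBernReal_midpoint_add_le hm hl₁' hl₂'
  rw [klBern_of_mem_Ioo _ hm, klBern_of_mem_Ioo _ hm, klBern_of_mem_Ioo _ hl₁',
    klBern_of_mem_Ioo _ hl₂']
  exact_mod_cast (by linarith : _ ≤ klBernReal μ₁ lam₁ + klBernReal μ₂ lam₂)

lemma klBern_midpoint_add_lt (h₁ : μ₁ ∈ Icc 0 1) (h₂ : μ₂ ∈ Icc 0 1) (h : μ₁ ≤ μ₂)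
    (hl₁ : lam₁ ∈ Icc 0 1) (hl₂ : lam₂ ∈ Icc 0 1) (hlt : lam₂ < lam₁) :
    klBern μ₁ ((μ₁ + μ₂) / 2) + klBern μ₂ ((μ₁ + μ₂) / 2)
      < klBern μ₁ lam₁ + klBern μ₂ lam₂ := by
  rcases h.eq_or_lt with rfl | hμ
  · rw [add_self_div_two, klBern_self, add_zero]
    rcases eq_or_ne μ₁ lam₁ with rfl | hne
    · rw [klBern_self, zero_add]
      exact klBern_pos h₁ hl₂ hlt.ne'
    · exact add_pos_of_pos_of_nonneg (klBern_pos h₁ hl₁ hne) (klBern_nonneg h₁ hl₂)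
  have hm : (μ₁ + μ₂) / 2 ∈ Ioo 0 1 := ⟨by linarith [h₁.1], by linarith [h₂.2]⟩
  rw [klBern_of_mem_Ioo _ hm, klBern_of_mem_Ioo _ hm]
  rcases klBern_add_eq_top_or_mem_Ioo h₁.1 h₂.2 hμ hl₁.2 hl₂.1 hlt.le with htop | ⟨hl₁', hl₂'⟩
  · rw [htop]
    exact EReal.coe_add _ _ ▸ EReal.coe_lt_top _
  have hlogit := sub_pos.2 (logit_strictMonoOn hl₂' hl₁' hlt)
  have hgap := mul_pos (by linarith : 0 < (μ₂ - μ₁) / 2) hlogit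
  have hbound := klBernReal_midpoint_add_le hm hl₁' hl₂'
  rw [klBern_of_mem_Ioo _ hl₁', klBern_of_mem_Ioo _ hl₂']
  exact_mod_cast (by linarith : _ < klBernReal μ₁ lam₁ + klBernReal μ₂ lam₂)

end midpoint

/-- The infimum of `kl(μ₁,λ₁) + kl(μ₂,λ₂)` over `{λ₁ ≥ λ₂} ⊆ [0,1]²` is attained on the
diagonal and equals its value at the midpoint; every minimizer satisfies `λ₁ = λ₂`. -/
theorem klBern_inf_over_ordered_pairs (μ₁ μ₂ : ℝ) (h₁ : μ₁ ∈ Set.Icc (0:ℝ) 1)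
    (h₂ : μ₂ ∈ Set.Icc (0:ℝ) 1) (h : μ₁ ≤ μ₂) :
    (⨅ p : {p : ℝ × ℝ // p.1 ∈ Set.Icc (0:ℝ) 1 ∧ p.2 ∈ Set.Icc (0:ℝ) 1 ∧ p.2 ≤ p.1},
        klBern μ₁ p.1.1 + klBern μ₂ p.1.2)
      = klBern μ₁ ((μ₁ + μ₂) / 2) + klBern μ₂ ((μ₁ + μ₂) / 2) ∧
    ∀ lam₁ lam₂ : ℝ, lam₁ ∈ Set.Icc (0:ℝ) 1 → lam₂ ∈ Set.Icc (0:ℝ) 1 → lam₂ ≤ lam₁ →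
      klBern μ₁ lam₁ + klBern μ₂ lam₂
        = klBern μ₁ ((μ₁ + μ₂) / 2) + klBern μ₂ ((μ₁ + μ₂) / 2) →
      lam₁ = lam₂ := by
  have hm : (μ₁ + μ₂) / 2 ∈ Icc (0:ℝ) 1 := ⟨by linarith [h₁.1, h₂.1], by linarith [h₁.2, h₂.2]⟩
  refine ⟨le_antisymm (iInf_le_of_le ⟨(_, _), hm, hm, le_rfl⟩ le_rfl)
    (le_iInf fun p => klBern_midpoint_add_le h₁ h₂ h p.2.1 p.2.2.1 p.2.2.2), ?_⟩
  intro lam₁ lam₂ hl₁ hl₂ hle heq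
  by_contra hne
  exact (klBern_midpoint_add_lt h₁ h₂ h hl₁ hl₂ (hle.lt_of_ne (Ne.symm hne))).ne' heq
end

section
/- Let μ : [0,1] → ℝ be unimodal with maximizer x* (strictly increasing on [0,x*], strictly decreasing on [x*,1]), and suppose there exist constants C₁ > 0 and ξ > 0 such that μ(x) − μ(y) ≥ C₁(|x*−y|^ξ − |x*−x|^ξ) for all 0 ≤ y ≤ x ≤ x* and all x* ≤ x ≤ y ≤ 1. Then for every Δ with 0 < Δ and x* + Δ/2 ≤ 1, min_{x ∈ [x*, x*+Δ/4]} (μ(x) − μ(x + Δ/4)) ≥ C₁ · min(1, 2^ξ − 1) · (Δ/4)^ξ. -/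
/-!
With `y = x + Δ/4`, the right-hand half of (P1) reduces the claim to
`(t + d)^ξ - t^ξ ≥ min(1, 2^ξ - 1) d^ξ` for `0 ≤ t ≤ d`, `t = x - x*`, `d = Δ/4`.
For `ξ ≥ 1` this is superadditivity of `t ↦ t^ξ`. For `ξ ≤ 1` the map is concave, so its
increments over intervals of length `d` decrease in `t` and the worst case is `t = d`,
where the increment is `(2^ξ - 1) d^ξ`.
-/

open Set

theorem ConcaveOn.map_add_sub_map_le_of_le
    {𝕜 : Type*} [Field 𝕜] [LinearOrder 𝕜] [IsStrictOrderedRing 𝕜]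
    {s : Set 𝕜} {f : 𝕜 → 𝕜} (hf : ConcaveOn 𝕜 s f)
    {a b d : 𝕜} (ha : a ∈ s) (hbd : b + d ∈ s) (hab : a ≤ b) (hd : 0 < d) :
    f (b + d) - f b ≤ f (a + d) - f a := by
  rcases hab.eq_or_lt with rfl | hab
  · exact le_rfl
  have mem : ∀ ⦃x⦄, a ≤ x → x ≤ b + d → x ∈ s := fun x h₁ h₂ =>
    hf.1.ordConnected.out ha hbd ⟨h₁, h₂⟩
  have h₁ : slope f a (b + d) ≤ slope f a (a + d) :=
    hf.slope_anti ha ⟨mem (by linarith) (by linarith), by simp [hd.ne']⟩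
      ⟨hbd, ne_of_gt (by linarith)⟩ (by linarith)
  have h₂ : slope f (b + d) b ≤ slope f (b + d) a :=
    hf.slope_anti hbd ⟨ha, ne_of_lt (by linarith)⟩ ⟨mem hab.le (by linarith), by simp [hd.ne']⟩
      hab.le
  rw [slope_comm f (b + d) a, slope_comm f (b + d) b] at h₂
  simp only [slope_def_field, add_sub_cancel_left] at h₁ h₂
  rw [← div_le_div_iff_of_pos_right hd]
  exact h₂.trans h₁

theorem Real.two_rpow_sub_one_mul_rpow_le_add_sub_rpow {t d p : ℝ} (hp₀ : 0 ≤ p) (hp₁ : p ≤ 1)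
    (ht : 0 ≤ t) (htd : t ≤ d) (hd : 0 < d) :
    (2 ^ p - 1) * d ^ p ≤ (t + d) ^ p - t ^ p := by
  have h := (Real.concaveOn_rpow hp₀ hp₁).map_add_sub_map_le_of_le ht
    (by simp only [mem_Ici]; linarith) htd hd
  rwa [← two_mul, Real.mul_rpow zero_le_two hd.le, ← sub_one_mul] at h

theorem Real.min_one_two_rpow_sub_one_mul_rpow_le_add_sub_rpow {t d p : ℝ} (hp : 0 ≤ p)
    (ht : 0 ≤ t) (htd : t ≤ d) (hd : 0 < d) :
    min 1 (2 ^ p - 1) * d ^ p ≤ (t + d) ^ p - t ^ p := by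
  have hdp : 0 ≤ d ^ p := Real.rpow_nonneg hd.le p
  rcases le_total 1 p with hp₁ | hp₁
  · calc min 1 (2 ^ p - 1) * d ^ p ≤ 1 * d ^ p := by gcongr; exact min_le_left _ _
      _ ≤ (t + d) ^ p - t ^ p := by
          rw [one_mul, le_sub_iff_add_le']; exact Real.add_rpow_le_rpow_add ht hd.le hp₁
  · calc min 1 (2 ^ p - 1) * d ^ p ≤ (2 ^ p - 1) * d ^ p := by gcongr; exact min_le_right _ _
      _ ≤ (t + d) ^ p - t ^ p := Real.two_rpow_sub_one_mul_rpow_le_add_sub_rpow hp hp₁ ht htd hd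

theorem unimodal_local_gap_lower_bound_general
    (μ : ℝ → ℝ) (xstar : ℝ)
    (C₁ ξ : ℝ) (hC₁ : 0 < C₁) (hξ : 0 < ξ)
    (hP1 : (∀ x y : ℝ, 0 ≤ y → y ≤ x → x ≤ xstar →
        μ x - μ y ≥ C₁ * (|xstar - y| ^ ξ - |xstar - x| ^ ξ)) ∧
      (∀ x y : ℝ, xstar ≤ x → x ≤ y → y ≤ 1 →
        μ x - μ y ≥ C₁ * (|xstar - y| ^ ξ - |xstar - x| ^ ξ)))
    (Δ : ℝ) (hΔ : 0 < Δ) (hΔ1 : xstar + Δ / 2 ≤ 1) :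
    ∀ x ∈ Icc xstar (xstar + Δ / 4),
      μ x - μ (x + Δ / 4) ≥ C₁ * min 1 ((2:ℝ) ^ ξ - 1) * (Δ / 4) ^ ξ := by
  rintro x ⟨hx₀, hx₁⟩
  have hP := hP1.2 x (x + Δ / 4) hx₀ (by linarith) (by linarith)
  rw [abs_sub_comm, abs_of_nonneg (by linarith), abs_sub_comm, abs_of_nonneg (by linarith),
    show x + Δ / 4 - xstar = (x - xstar) + Δ / 4 by ring] at hP
  have hgap := Real.min_one_two_rpow_sub_one_mul_rpow_le_add_sub_rpow hξ.le (sub_nonneg.2 hx₀)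
    (by linarith : x - xstar ≤ Δ / 4) (by positivity)
  rw [mul_assoc]
  exact hP.trans' (mul_le_mul_of_nonneg_left hgap hC₁.le)

/-- Lower bound on the local decrease of a unimodal function satisfying (P1):
`h_μ`-type bound `μ(x) − μ(x+Δ/4) ≥ C₁ min(1, 2^ξ−1)(Δ/4)^ξ` on `[x*, x*+Δ/4]`. -/
theorem unimodal_local_gap_lower_bound
    (μ : ℝ → ℝ) (xstar : ℝ) (hx : xstar ∈ Icc (0:ℝ) 1)
    (hmono : StrictMonoOn μ (Icc 0 xstar)) (hanti : StrictAntiOn μ (Icc xstar 1))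
    (C₁ ξ : ℝ) (hC₁ : 0 < C₁) (hξ : 0 < ξ)
    (hP1 : (∀ x y : ℝ, 0 ≤ y → y ≤ x → x ≤ xstar →
        μ x - μ y ≥ C₁ * (|xstar - y| ^ ξ - |xstar - x| ^ ξ)) ∧
      (∀ x y : ℝ, xstar ≤ x → x ≤ y → y ≤ 1 →
        μ x - μ y ≥ C₁ * (|xstar - y| ^ ξ - |xstar - x| ^ ξ)))
    (Δ : ℝ) (hΔ : 0 < Δ) (hΔ1 : xstar + Δ / 2 ≤ 1) :
    ∀ x ∈ Icc xstar (xstar + Δ / 4),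
      μ x - μ (x + Δ / 4) ≥ C₁ * min 1 ((2:ℝ) ^ ξ - 1) * (Δ / 4) ^ ξ :=
  unimodal_local_gap_lower_bound_general μ xstar C₁ ξ hC₁ hξ hP1 Δ hΔ hΔ1
end
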